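/- Let 𝔫 be a Lie algebra over a field of characteristic zero admitting an LR-structure. Then 𝔫 is two-step solvable, i.e., its derived subalgebra [𝔫,𝔫] is abelian. -/

import Mathlib

/-!
Left- and right-commutativity of the LR-product make any two products `u·v` and `w·z` commute
for it. Expanding `[[a,b],[c,d]]` through `[x,y] = x·y − y·x` therefore writes it as a signed sum
of products of products which cancel in pairs, and the derived algebra, spanned by brackets, is
abelian.
-/

/-- An LR-structure on a Lie algebra `𝔫`: a bilinear product `x·y` with
`[x,y] = x·y − y·x`, `x·(y·z) = y·(x·z)` and `(x·y)·z = (x·z)·y`. -/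
def IsLRStructure {K N : Type*} [Field K] [LieRing N] [LieAlgebra K N]
    (mul : N →ₗ[K] N →ₗ[K] N) : Prop :=
  (∀ x y : N, ⁅x, y⁆ = mul x y - mul y x) ∧
  (∀ x y z : N, mul x (mul y z) = mul y (mul x z)) ∧
  (∀ x y z : N, mul (mul x y) z = mul (mul x z) y)

theorem mul_mul_comm_of_left_comm_of_right_comm {α : Type*} (mul : α → α → α)
    (left_comm : ∀ x y z, mul x (mul y z) = mul y (mul x z))
    (right_comm : ∀ x y z, mul (mul x y) z = mul (mul x z) y) (u v w z : α) :
    mul (mul u v) (mul w z) = mul (mul w z) (mul u v) :=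
  calc mul (mul u v) (mul w z)
      = mul (mul u (mul w z)) v := right_comm u v _
    _ = mul (mul w (mul u z)) v := by rw [left_comm u w z]
    _ = mul (mul w v) (mul u z) := right_comm w _ v
    _ = mul u (mul (mul w v) z) := left_comm _ u z
    _ = mul u (mul (mul w z) v) := by rw [right_comm w v z]
    _ = mul (mul w z) (mul u v) := left_comm u _ v

theorem IsLRStructure.lie_lie_lie_eq_zero {K N : Type*} [Field K] [LieRing N] [LieAlgebra K N]
    {mul : N →ₗ[K] N →ₗ[K] N} (h : IsLRStructure mul) (a b c d : N) :
    ⁅⁅a, b⁆, ⁅c, d⁆⁆ = 0 := by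
  obtain ⟨lie_eq, left_comm, right_comm⟩ := h
  have comm := mul_mul_comm_of_left_comm_of_right_comm (fun x y => mul x y) left_comm right_comm
  simp only [lie_eq, map_sub, LinearMap.sub_apply]
  rw [comm a b c d, comm a b d c, comm b a c d, comm b a d c]
  abel

theorem LieAlgebra.derivedSeries_two_eq_bot_of_lie_lie_lie_eq_zero {R L : Type*} [CommRing R]
    [LieRing L] [LieAlgebra R L] (h : ∀ a b c d : L, ⁅⁅a, b⁆, ⁅c, d⁆⁆ = 0) :
    derivedSeries R L 2 = ⊥ := by
  change ⁅derivedSeries R L 1, derivedSeries R L 1⁆ = ⊥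
  rw [LieSubmodule.lie_eq_bot_iff]
  intro x hx y hy
  replace hx : x ∈ (derivedSeries R L 1 : Submodule R L) := hx
  replace hy : y ∈ (derivedSeries R L 1 : Submodule R L) := hy
  rw [coe_derivedSeries_one_eq] at hx hy
  induction hx, hy using Submodule.span_induction₂ with
  | mem_mem x y hx hy =>
    obtain ⟨a, b, rfl⟩ := hx
    obtain ⟨c, d, rfl⟩ := hy
    exact h a b c d
  | zero_left y _ => exact zero_lie y
  | zero_right x _ => exact lie_zero x
  | add_left x y z _ _ _ hxz hyz => rw [add_lie, hxz, hyz, add_zero]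
  | add_right x y z _ _ _ hxy hxz => rw [lie_add, hxy, hxz, add_zero]
  | smul_left r x y _ _ hxy => rw [smul_lie, hxy, smul_zero]
  | smul_right r x y _ _ hxy => rw [lie_smul, hxy, smul_zero]

theorem lr_structure_implies_two_step_solvable_general
    (K : Type*) (N : Type*) [Field K]
    [LieRing N] [LieAlgebra K N]
    (mul : N →ₗ[K] N →ₗ[K] N) (h : IsLRStructure mul) :
    LieAlgebra.derivedSeries K N 2 = ⊥ :=
  LieAlgebra.derivedSeries_two_eq_bot_of_lie_lie_lie_eq_zero h.lie_lie_lie_eq_zero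

/-- A Lie algebra over a field of characteristic zero admitting an LR-structure is
two-step solvable: its derived subalgebra is abelian. -/
theorem lr_structure_implies_two_step_solvable
    (K : Type*) (N : Type*) [Field K] [CharZero K]
    [LieRing N] [LieAlgebra K N]
    (mul : N →ₗ[K] N →ₗ[K] N) (h : IsLRStructure mul) :
    LieAlgebra.derivedSeries K N 2 = ⊥ :=
  lr_structure_implies_two_step_solvable_general K N mul h
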